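/- arXiv:2101.03643 — 6 statements merged into one kernel-verified Lean document; each statement's English description precedes it below -/
import Mathlib

section
/- Let I ⊆ J be ideals of a Noetherian commutative ring R and p a prime ideal such that J·R_p = (I·R_p : (pR_p)^∞), i.e., J_p is the saturation of I_p with respect to p in R_p. Then there exists m₀ ≥ 1 such that for all m ≥ m₀, the natural surjection induces an isomorphism J_p/I_p ≅ (J_p + p^m R_p)/(I_p + p^m R_p). Equivalently, J_p ∩ (I_p + p^m R_p) = I_p for m ≫ 0. -/
/-!
Since `R_p` is Noetherian, the ascending chain `(I_p : p^k)` stabilises, so the saturation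
hypothesis gives `p^N J_p ⊆ I_p` for some `N`. Artin–Rees gives `J_p ∩ p^m ⊆ p^(m-k) J_p ⊆ p^N J_p ⊆ I_p`
for `m ≥ k + N`, and the modular law turns this into `J_p ∩ (I_p + p^m) = I_p`.
-/

theorem inf_sup_eq_of_inf_le {α : Type*} [Lattice α] [IsModularLattice α] {x y z : α}
    (hyx : y ≤ x) (hxz : x ⊓ z ≤ y) : x ⊓ (y ⊔ z) = y := by
  rw [sup_comm, ← inf_sup_assoc_of_le z hyx, sup_eq_right.mpr hxz]

namespace Ideal

variable {A : Type*} [CommRing A] [IsNoetherianRing A]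

theorem exists_pow_mul_le_of_le_iSup_colon_pow {I J q : Ideal A}
    (hJ : J ≤ ⨆ k : ℕ, I.colon ((q ^ k : Ideal A) : Set A)) : ∃ N, q ^ N * J ≤ I := by
  let chain : ℕ →o Ideal A :=
    ⟨fun k ↦ I.colon ((q ^ k : Ideal A) : Set A), fun _ _ hab ↦
      Submodule.colon_mono le_rfl (SetLike.coe_subset_coe.mpr (pow_le_pow_right hab))⟩
  obtain ⟨N, hN⟩ := WellFoundedGT.monotone_chain_condition chain
  have hJN : J ≤ chain N := hJ.trans <| iSup_le fun k ↦ by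
    rcases le_total k N with hk | hk
    · exact chain.monotone hk
    · exact (hN k hk).ge
  refine ⟨N, mul_le.mpr fun a ha b hb ↦ ?_⟩
  rw [mul_comm]
  exact Submodule.mem_colon.mp (hJN hb) a ha

theorem exists_inf_pow_le_pow_sub_mul (q J : Ideal A) :
    ∃ k, ∀ n ≥ k, J ⊓ q ^ n ≤ q ^ (n - k) * J := by
  obtain ⟨k, hk⟩ := exists_pow_inf_eq_pow_smul q (J : Submodule A A)
  refine ⟨k, fun n hn ↦ ?_⟩
  have hAR := hk n hn
  simp only [smul_eq_mul, mul_top] at hAR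
  rw [inf_comm, hAR]
  exact mul_mono_right inf_le_right

theorem exists_inf_sup_pow_eq_of_le_iSup_colon_pow {I J q : Ideal A} (hIJ : I ≤ J)
    (hJ : J ≤ ⨆ k : ℕ, I.colon ((q ^ k : Ideal A) : Set A)) :
    ∃ m₀, ∀ m ≥ m₀, J ⊓ (I ⊔ q ^ m) = I := by
  obtain ⟨N, hN⟩ := exists_pow_mul_le_of_le_iSup_colon_pow hJ
  obtain ⟨k, hk⟩ := exists_inf_pow_le_pow_sub_mul q J
  refine ⟨k + N, fun m hm ↦ inf_sup_eq_of_inf_le hIJ ?_⟩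
  calc J ⊓ q ^ m ≤ q ^ (m - k) * J := hk m (by omega)
    _ ≤ q ^ N * J := mul_mono_left (pow_le_pow_right (by omega))
    _ ≤ I := hN

end Ideal

/-- let `I ⊆ J` be ideals of a Noetherian commutative ring `R` and `p` a
prime ideal such that `J·R_p` is the saturation `(I·R_p : (pR_p)^∞)`.  Then there is
`m₀ ≥ 1` such that for all `m ≥ m₀` we have `J_p ∩ (I_p + p^m R_p) = I_p`
(equivalently, the natural surjection `J_p/I_p → (J_p + p^m R_p)/(I_p + p^m R_p)` is an
isomorphism for all `m ≥ m₀`). -/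
theorem saturation_stabilizes {R : Type*} [CommRing R] [IsNoetherianRing R]
    (I J p : Ideal R) [p.IsPrime] (hIJ : I ≤ J) :
    let Rp := Localization.AtPrime p
    let f := algebraMap R Rp
    let Ip := I.map f
    let Jp := J.map f
    let pp := p.map f
    Jp = (⨆ k : ℕ, Submodule.colon Ip ((pp ^ k : Ideal Rp) : Set Rp)) →
      ∃ m₀ : ℕ, 1 ≤ m₀ ∧ ∀ m : ℕ, m₀ ≤ m → Jp ⊓ (Ip + pp ^ m) = Ip := by
  intro Rp f Ip Jp pp hsat
  obtain ⟨m₀, hm₀⟩ :=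
    Ideal.exists_inf_sup_pow_eq_of_le_iSup_colon_pow (Ideal.map_mono hIJ) hsat.le
  exact ⟨m₀ + 1, by omega, fun m hm ↦ hm₀ m (by omega)⟩
end

section
/- Let R be a commutative ring, W ⊆ R a multiplicatively closed set, M an R-module, and δ : M → N an A-linear differential operator of order ≤ m (for A ⊆ R a subring with W ∩ A acting invertibly on localized modules as needed). Then there exists a unique (W∩A)⁻¹A-linear differential operator δ' : W⁻¹M → W⁻¹N of order ≤ m such that δ'(β/1) = δ(β)/1 for all β ∈ M, constructed inductively by δ'(β/w) = (δ(β) − [δ,w]'(β/w))/w. -/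
/-- The commutator `[δ, r] = δ ∘ (r • ·) - r • δ` of an `A`-linear map `δ : M → N`
with multiplication by `r ∈ R`. -/
def commutatorSMul {R A M N : Type*} [CommRing R] [CommRing A] [Algebra A R]
    [AddCommGroup M] [Module R M] [AddCommGroup N] [Module R N]
    [Module A M] [Module A N] [IsScalarTower A R M] [IsScalarTower A R N]
    (δ : M →ₗ[A] N) (r : R) : M →ₗ[A] N where
  toFun w := δ (r • w) - r • δ w
  map_add' x y := by simp only [smul_add, map_add]; abel
  map_smul' a x := by
    simp only [RingHom.id_apply]
    rw [← smul_comm a r x]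
    simp only [map_smul]
    rw [← smul_comm a r (δ x), ← smul_sub]

/-- `IsDiffOp m δ` says that `δ` is an `A`-linear differential operator of order at
most `m` relative to the `R`-module structures: `Diff⁰ = Hom_R(M,N)`, and
`δ ∈ Diffᵐ` iff `[δ, r] ∈ Diffᵐ⁻¹` for all `r ∈ R`. -/
def IsDiffOp (R : Type*) {A M N : Type*} [CommRing R] [CommRing A] [Algebra A R]
    [AddCommGroup M] [Module R M] [AddCommGroup N] [Module R N]
    [Module A M] [Module A N] [IsScalarTower A R M] [IsScalarTower A R N] :
    ℕ → (M →ₗ[A] N) → Prop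
  | 0, δ => ∀ (r : R) (w : M), δ (r • w) = r • δ w
  | m + 1, δ => ∀ r : R, IsDiffOp R m (commutatorSMul δ r)

/-!
Uniqueness: an operator of order `m` on `W⁻¹M` that vanishes on `M / 1` vanishes, by induction on
`m`, because `w • δ'(β / w) = δ'(β / 1) - [δ', w](β / w)`.

Existence, by induction on `m`: the commutators `[δ, r]` have localizations `[δ, r]'` of order
`m - 1`, and uniqueness forces the Leibniz rule `[δ, r s]' = [δ, r]' ∘ s + r [δ, s]'`. This
rule is exactly what makes `δ'(β / w) = w⁻¹ (δ(β) / 1 - [δ, w]'(β / w))` independent of the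
representative and additive, and it gives `[δ', r / 1] = [δ, r]'`. Since
`[δ', r / s] = s⁻¹ ([δ', r / 1] - [δ', s / 1] ∘ (r / s))`, `δ'` has order `m`.
-/

section DiffOp

variable {R A M N : Type*} [CommRing R] [CommRing A] [Algebra A R]
  [AddCommGroup M] [Module R M] [AddCommGroup N] [Module R N]
  [Module A M] [Module A N] [IsScalarTower A R M] [IsScalarTower A R N]

@[simp]
theorem commutatorSMul_apply (δ : M →ₗ[A] N) (r : R) (x : M) :
    commutatorSMul δ r x = δ (r • x) - r • δ x :=
  rfl

theorem commutatorSMul_add (δ₁ δ₂ : M →ₗ[A] N) (r : R) :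
    commutatorSMul (δ₁ + δ₂) r = commutatorSMul δ₁ r + commutatorSMul δ₂ r := by
  ext x
  simp only [commutatorSMul_apply, LinearMap.add_apply, smul_add]
  abel

theorem commutatorSMul_smul (δ : M →ₗ[A] N) (ρ r : R) :
    commutatorSMul (ρ • δ) r = ρ • commutatorSMul δ r := by
  ext x
  simp only [commutatorSMul_apply, LinearMap.smul_apply, smul_sub, smul_comm ρ r]

theorem commutatorSMul_comp_smul (δ : M →ₗ[A] N) (ρ r : R) :
    commutatorSMul (δ ∘ₗ DistribSMul.toLinearMap A M ρ) r
      = commutatorSMul δ r ∘ₗ DistribSMul.toLinearMap A M ρ := by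
  ext x
  simp only [commutatorSMul_apply, LinearMap.comp_apply, DistribSMul.toLinearMap_apply,
    smul_comm ρ r]

theorem commutatorSMul_mul (δ : M →ₗ[A] N) (r s : R) :
    commutatorSMul δ (r * s)
      = commutatorSMul δ r ∘ₗ DistribSMul.toLinearMap A M s + r • commutatorSMul δ s := by
  ext x
  simp only [commutatorSMul_apply, LinearMap.add_apply, LinearMap.comp_apply,
    DistribSMul.toLinearMap_apply, LinearMap.smul_apply, smul_sub, mul_smul]
  abel

theorem IsDiffOp.add {m : ℕ} {δ₁ δ₂ : M →ₗ[A] N} (h₁ : IsDiffOp R m δ₁)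
    (h₂ : IsDiffOp R m δ₂) : IsDiffOp R m (δ₁ + δ₂) := by
  induction m generalizing δ₁ δ₂ with
  | zero => intro r x; simp only [LinearMap.add_apply, h₁ r x, h₂ r x, smul_add]
  | succ m ih => intro r; rw [commutatorSMul_add]; exact ih (h₁ r) (h₂ r)

theorem IsDiffOp.smul {m : ℕ} {δ : M →ₗ[A] N} (h : IsDiffOp R m δ) (ρ : R) :
    IsDiffOp R m (ρ • δ) := by
  induction m generalizing δ with
  | zero => intro r x; simp only [LinearMap.smul_apply, h r x, smul_comm ρ r]
  | succ m ih => intro r; rw [commutatorSMul_smul]; exact ih (h r)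

theorem IsDiffOp.sub {m : ℕ} {δ₁ δ₂ : M →ₗ[A] N} (h₁ : IsDiffOp R m δ₁)
    (h₂ : IsDiffOp R m δ₂) : IsDiffOp R m (δ₁ - δ₂) := by
  simpa only [neg_one_smul, ← sub_eq_add_neg] using h₁.add (h₂.smul (-1))

theorem IsDiffOp.comp_smul {m : ℕ} {δ : M →ₗ[A] N} (h : IsDiffOp R m δ) (ρ : R) :
    IsDiffOp R m (δ ∘ₗ DistribSMul.toLinearMap A M ρ) := by
  induction m generalizing δ with
  | zero =>
    intro r x
    simp only [LinearMap.comp_apply, DistribSMul.toLinearMap_apply, smul_comm ρ r, h r]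
  | succ m ih => intro r; rw [commutatorSMul_comp_smul]; exact ih (h r)

end DiffOp

theorem IsDiffOp.succ_of_commutatorSMul_algebraMap {R S A P Q : Type*} [CommRing R]
    [CommRing S] [CommRing A] [Algebra R S] [Algebra A S] (W : Submonoid R) [IsLocalization W S]
    [AddCommGroup P] [Module S P] [AddCommGroup Q] [Module S Q]
    [Module A P] [Module A Q] [IsScalarTower A S P] [IsScalarTower A S Q]
    {m : ℕ} {δ : P →ₗ[A] Q}
    (h : ∀ r : R, IsDiffOp S m (commutatorSMul δ (algebraMap R S r))) :
    IsDiffOp S (m + 1) δ := by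
  intro ρ
  obtain ⟨⟨r, s⟩, rfl⟩ := IsLocalization.mk'_surjective W ρ
  have hρ : commutatorSMul δ (IsLocalization.mk' S r s) = IsLocalization.mk' S (1 : R) s •
      (commutatorSMul δ (algebraMap R S r)
        - commutatorSMul δ (algebraMap R S s) ∘ₗ
            DistribSMul.toLinearMap A P (IsLocalization.mk' S r s)) := by
    rw [← IsLocalization.mk'_spec' S r s, commutatorSMul_mul, add_sub_cancel_left, smul_smul,
      IsLocalization.mk'_spec, map_one, one_smul]
  rw [hρ]
  exact ((h r).sub ((h s).comp_smul _)).smul _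

section Localization

/- The `A`-actions on `LocalizedModule W M` induced from `M` would shadow the given ones, with which
they need not agree definitionally. -/
attribute [-instance] OreLocalization.instSMulOfIsScalarTower
  OreLocalization.instMulActionOfIsScalarTower
  OreLocalization.instDistribMulActionOfIsScalarTower
  OreLocalization.instModuleOfIsScalarTower

open LocalizedModule (mk)

variable {R A : Type*} [CommRing R] [CommRing A] [Algebra A R] (W : Submonoid R)

theorem LocalizedModule.algebraMap_smul_mk {P : Type*} [AddCommGroup P] [Module R P]
    (r : R) (β : P) (w : W) :
    algebraMap R (Localization W) r • mk β w = mk (r • β) w := by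
  rw [← Localization.mk_one_eq_algebraMap, LocalizedModule.mk_smul_mk, one_mul]

theorem LocalizedModule.mk_sub {P : Type*} [AddCommGroup P] [Module R P] (m m' : P) (s : W) :
    mk (m - m') s = mk m s - mk m' s := by
  rw [sub_eq_add_neg, sub_eq_add_neg, ← LocalizedModule.mk_neg, OreLocalization.add_oreDiv]

theorem LocalizedModule.smul_mk_of_isScalarTower {P : Type*} [AddCommGroup P] [Module R P]
    [Module A P] [IsScalarTower A R P] [instAP : Module A (LocalizedModule W P)]
    [@IsScalarTower A (Localization W) (LocalizedModule W P) _ _ instAP.toSMul]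
    (a : A) (β : P) (w : W) :
    a • mk β w = mk (a • β) w := by
  rw [← algebraMap_smul (Localization W) a, IsScalarTower.algebraMap_apply A R (Localization W),
    LocalizedModule.algebraMap_smul_mk, algebraMap_smul]

theorem Localization.mk_one_smul_algebraMap_smul {P : Type*} [AddCommGroup P]
    [Module (Localization W) P] (w : W) (y : P) :
    Localization.mk 1 w • algebraMap R (Localization W) w • y = y := by
  rw [smul_smul, Localization.mk_eq_mk', IsLocalization.mk'_spec, map_one, one_smul]

theorem Localization.mk_one_mul_smul_algebraMap_smul {P : Type*} [AddCommGroup P]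
    [Module (Localization W) P] (c w : W) (y : P) :
    Localization.mk 1 (c * w) • algebraMap R (Localization W) c • y
      = Localization.mk 1 w • y := by
  rw [← Localization.mk_one_smul_algebraMap_smul W c (Localization.mk 1 w • y),
    smul_comm _ (Localization.mk 1 w), smul_smul (Localization.mk 1 c), Localization.mk_mul,
    one_mul, mul_comm]

variable {M N : Type*} [AddCommGroup M] [Module R M] [AddCommGroup N] [Module R N]
  [instAM : Module A (LocalizedModule W M)] [instAN : Module A (LocalizedModule W N)]

section Uniqueness

variable [@IsScalarTower A (Localization W) (LocalizedModule W M) _ _ instAM.toSMul]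
  [@IsScalarTower A (Localization W) (LocalizedModule W N) _ _ instAN.toSMul]

theorem IsDiffOp.eq_zero_of_mk_one {m : ℕ}
    {ε : LocalizedModule W M →ₗ[A] LocalizedModule W N} (hε : IsDiffOp (Localization W) m ε)
    (h : ∀ β : M, ε (mk β 1) = 0) : ε = 0 := by
  induction m generalizing ε with
  | zero =>
    refine LinearMap.ext fun x => LocalizedModule.induction_on (fun β w => ?_) x
    rw [← one_smul R β, ← mul_one w, ← LocalizedModule.mk_smul_mk, hε, h, smul_zero,
      LinearMap.zero_apply]
  | succ m ih =>
    refine LinearMap.ext fun x => LocalizedModule.induction_on (fun β w => ?_) x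
    have hw := ih (hε (algebraMap R _ w)) fun β' => by
      rw [commutatorSMul_apply, LocalizedModule.algebraMap_smul_mk, h, h, smul_zero, sub_zero]
    have := LinearMap.congr_fun hw (mk β w)
    rwa [commutatorSMul_apply, LocalizedModule.algebraMap_smul_mk, ← Submonoid.smul_def,
      LocalizedModule.mk_cancel, h, zero_sub, LinearMap.zero_apply, neg_eq_zero,
      (IsLocalization.map_units (Localization W) w).smul_eq_zero] at this

theorem IsDiffOp.ext_of_mk_one {m : ℕ}
    {ε₁ ε₂ : LocalizedModule W M →ₗ[A] LocalizedModule W N}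
    (h₁ : IsDiffOp (Localization W) m ε₁) (h₂ : IsDiffOp (Localization W) m ε₂)
    (h : ∀ β : M, ε₁ (mk β 1) = ε₂ (mk β 1)) : ε₁ = ε₂ :=
  sub_eq_zero.mp <| (h₁.sub h₂).eq_zero_of_mk_one W fun β => by
    rw [LinearMap.sub_apply, h, sub_self]

end Uniqueness

variable [Module A M] [Module A N] [IsScalarTower A R M] [IsScalarTower A R N]

section Existence

variable {W}

/-- `D r` is the paper's `[δ, r]'`. -/
structure IsLocalizedCommutatorFamily (δ : M →ₗ[A] N)
    (D : R → LocalizedModule W M →ₗ[A] LocalizedModule W N) : Prop where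
  apply_mul : ∀ r s x, D (r * s) x
    = D r (algebraMap R (Localization W) s • x) + algebraMap R (Localization W) r • D s x
  apply_mk : ∀ r β, D r (mk β 1) = mk (commutatorSMul δ r β) 1

noncomputable def localizedExtensionFun (δ : M →ₗ[A] N)
    (D : R → LocalizedModule W M →ₗ[A] LocalizedModule W N) (p : M × W) :
    LocalizedModule W N :=
  Localization.mk 1 p.2 • (mk (δ p.1) 1 - D p.2 (mk p.1 p.2))

variable {δ : M →ₗ[A] N} {D : R → LocalizedModule W M →ₗ[A] LocalizedModule W N}

theorem mk_sub_apply_mul_mk (hD : IsLocalizedCommutatorFamily δ D)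
    (r : R) (β : M) (w : W) :
    mk (δ (r • β)) 1 - D (r * w) (mk β w)
      = algebraMap R (Localization W) r • (mk (δ β) 1 - D w (mk β w)) := by
  rw [hD.apply_mul, LocalizedModule.algebraMap_smul_mk, ← Submonoid.smul_def,
    LocalizedModule.mk_cancel, hD.apply_mk, commutatorSMul_apply, LocalizedModule.mk_sub,
    smul_sub, LocalizedModule.algebraMap_smul_mk]
  abel

theorem localizedExtensionFun_smul_mul (hD : IsLocalizedCommutatorFamily δ D) (c w : W)
    (β : M) :
    localizedExtensionFun δ D (c • β, c * w) = localizedExtensionFun δ D (β, w) := by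
  rw [localizedExtensionFun, localizedExtensionFun, LocalizedModule.mk_cancel_common_left,
    Submonoid.smul_def, Submonoid.coe_mul, mk_sub_apply_mul_mk hD,
    Localization.mk_one_mul_smul_algebraMap_smul]

theorem localizedExtensionFun_add (hD : IsLocalizedCommutatorFamily δ D) (β β' : M) (w w' : W) :
    localizedExtensionFun δ D (w' • β + w • β', w * w')
      = localizedExtensionFun δ D (β, w) + localizedExtensionFun δ D (β', w') := by
  rw [← localizedExtensionFun_smul_mul hD w' w β, ← localizedExtensionFun_smul_mul hD w w' β',
    mul_comm w' w]
  simp only [localizedExtensionFun, map_add, ← OreLocalization.add_oreDiv]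
  rw [← smul_add, add_sub_add_comm]

theorem localizedExtensionFun_one (hD : IsLocalizedCommutatorFamily δ D) (β : M) :
    localizedExtensionFun δ D (β, 1) = mk (δ β) 1 := by
  rw [localizedExtensionFun, OneMemClass.coe_one, hD.apply_mk, commutatorSMul_apply, one_smul,
    one_smul, sub_self, LocalizedModule.zero_mk, sub_zero, Localization.mk_one, one_smul]

theorem localizedExtensionFun_smul_eq_smul_add (hD : IsLocalizedCommutatorFamily δ D) (r : R)
    (β : M) (w : W) :
    localizedExtensionFun δ D (r • β, w)
      = algebraMap R (Localization W) r • localizedExtensionFun δ D (β, w) + D r (mk β w) := by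
  have hmul := hD.apply_mul w r (mk β w)
  rw [mul_comm, LocalizedModule.algebraMap_smul_mk] at hmul
  rw [localizedExtensionFun, localizedExtensionFun, ← sub_eq_iff_eq_add.mpr hmul,
    sub_sub_eq_add_sub, add_sub_right_comm, mk_sub_apply_mul_mk hD, smul_add,
    Localization.mk_one_smul_algebraMap_smul, smul_comm]

variable [@IsScalarTower A (Localization W) (LocalizedModule W M) _ _ instAM.toSMul]
  [@IsScalarTower A (Localization W) (LocalizedModule W N) _ _ instAN.toSMul]

theorem localizedExtensionFun_smul (a : A) (β : M) (w : W) :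
    localizedExtensionFun δ D (a • β, w) = a • localizedExtensionFun δ D (β, w) := by
  simp only [localizedExtensionFun, map_smul, ← LocalizedModule.smul_mk_of_isScalarTower]
  rw [← smul_sub, smul_comm]

noncomputable def localizedExtension (hD : IsLocalizedCommutatorFamily δ D) :
    LocalizedModule W M →ₗ[A] LocalizedModule W N where
  toFun x := x.liftOn (localizedExtensionFun δ D) <| by
    rintro ⟨β, w⟩ ⟨β', w'⟩ ⟨u, hu⟩
    rw [← localizedExtensionFun_smul_mul hD (u * w') w β,
      ← localizedExtensionFun_smul_mul hD (u * w) w' β', mul_smul, mul_smul, hu, mul_right_comm]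
  map_add' x y := by
    induction x, y using LocalizedModule.induction_on₂ with
    | h β β' w w' =>
      simp only [LocalizedModule.mk_add_mk, LocalizedModule.liftOn_mk]
      exact localizedExtensionFun_add hD β β' w w'
  map_smul' a x := by
    induction x using LocalizedModule.induction_on with
    | h β w =>
      simp only [LocalizedModule.smul_mk_of_isScalarTower, LocalizedModule.liftOn_mk]
      exact localizedExtensionFun_smul a β w

theorem localizedExtension_mk_one (hD : IsLocalizedCommutatorFamily δ D)
    (β : M) : localizedExtension hD (mk β 1) = mk (δ β) 1 :=
  localizedExtensionFun_one hD β

theorem commutatorSMul_localizedExtension (hD : IsLocalizedCommutatorFamily δ D)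
    (r : R) : commutatorSMul (localizedExtension hD) (algebraMap R (Localization W) r) = D r := by
  refine LinearMap.ext fun x => LocalizedModule.induction_on (fun β w => ?_) x
  rw [commutatorSMul_apply, LocalizedModule.algebraMap_smul_mk]
  simp only [localizedExtension, LinearMap.coe_mk, AddHom.coe_mk, LocalizedModule.liftOn_mk]
  rw [localizedExtensionFun_smul_eq_smul_add hD, add_sub_cancel_left]

variable (W)

theorem exists_localized_diffOp_zero (hδ : IsDiffOp R 0 δ) :
    ∃ δ' : LocalizedModule W M →ₗ[A] LocalizedModule W N, IsDiffOp (Localization W) 0 δ' ∧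
      ∀ β : M, δ' (mk β 1) = mk (δ β) 1 :=
  ⟨(LocalizedModule.map W { δ with map_smul' := hδ }).restrictScalars A,
    fun ρ x => LinearMap.map_smul _ ρ x, fun β => LocalizedModule.map_mk _ _ β 1⟩

theorem exists_localized_diffOp {m : ℕ} (hδ : IsDiffOp R m δ) :
    ∃ δ' : LocalizedModule W M →ₗ[A] LocalizedModule W N, IsDiffOp (Localization W) m δ' ∧
      ∀ β : M, δ' (mk β 1) = mk (δ β) 1 := by
  induction m generalizing δ with
  | zero => exact exists_localized_diffOp_zero W hδ
  | succ m ih =>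
    choose D hD hD_mk using fun r => ih (hδ r)
    have hD_mul (r s : R) : D (r * s) = D r ∘ₗ DistribSMul.toLinearMap A _
        (algebraMap R (Localization W) s) + algebraMap R (Localization W) r • D s :=
      (hD (r * s)).ext_of_mk_one W (((hD r).comp_smul _).add ((hD s).smul _)) fun β => by
        simp only [hD_mk, commutatorSMul_mul, LinearMap.add_apply, LinearMap.comp_apply,
          DistribSMul.toLinearMap_apply, LinearMap.smul_apply, LocalizedModule.algebraMap_smul_mk]
        exact OreLocalization.add_oreDiv.symm
    have hfam : IsLocalizedCommutatorFamily δ D :=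
      ⟨fun r s x => by simpa using LinearMap.congr_fun (hD_mul r s) x, hD_mk⟩
    refine ⟨localizedExtension hfam, IsDiffOp.succ_of_commutatorSMul_algebraMap W fun r => ?_,
      localizedExtension_mk_one hfam⟩
    rw [commutatorSMul_localizedExtension hfam]
    exact hD r

end Existence

end Localization

theorem existsUnique_localized_diffOp_general {R A M N : Type*} [CommRing R] [CommRing A]
    [Algebra A R] [AddCommGroup M] [Module R M]
    [AddCommGroup N] [Module R N]
    [Module A M] [Module A N] [IsScalarTower A R M] [IsScalarTower A R N]
    (W : Submonoid R)
    [instAM : Module A (LocalizedModule W M)] [instAN : Module A (LocalizedModule W N)]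
    [@IsScalarTower A (Localization W) (LocalizedModule W M) _ _ instAM.toSMul]
    [@IsScalarTower A (Localization W) (LocalizedModule W N) _ _ instAN.toSMul]
    {m : ℕ} (δ : M →ₗ[A] N) (hδ : IsDiffOp R m δ) :
    ∃! δ' : LocalizedModule W M →ₗ[A] LocalizedModule W N,
      IsDiffOp (Localization W) m δ' ∧
      ∀ β : M, δ' (LocalizedModule.mkLinearMap W M β)
        = LocalizedModule.mkLinearMap W N (δ β) := by
  obtain ⟨δ', hδ', hmk⟩ := exists_localized_diffOp W hδ
  exact ⟨δ', ⟨hδ', hmk⟩, fun δ'' ⟨hδ'', hmk''⟩ =>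
    hδ''.ext_of_mk_one W hδ' fun β => (hmk'' β).trans (hmk β).symm⟩

/-- an `A`-linear differential operator `δ : M → N` of order `≤ m`
(with `M` finitely generated) extends uniquely to a differential operator
`δ' : W⁻¹M → W⁻¹N` of order `≤ m` over the localized ring, compatible with the
localization maps: `δ'(β/1) = δ(β)/1` for all `β ∈ M`. -/
theorem existsUnique_localized_diffOp {R A M N : Type*} [CommRing R] [CommRing A]
    [Algebra A R] [AddCommGroup M] [Module R M] [Module.Finite R M]
    [AddCommGroup N] [Module R N]
    [Module A M] [Module A N] [IsScalarTower A R M] [IsScalarTower A R N]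
    (W : Submonoid R)
    [instAM : Module A (LocalizedModule W M)] [instAN : Module A (LocalizedModule W N)]
    [@IsScalarTower A (Localization W) (LocalizedModule W M) _ _ instAM.toSMul]
    [@IsScalarTower A (Localization W) (LocalizedModule W N) _ _ instAN.toSMul]
    {m : ℕ} (δ : M →ₗ[A] N) (hδ : IsDiffOp R m δ) :
    ∃! δ' : LocalizedModule W M →ₗ[A] LocalizedModule W N,
      IsDiffOp (Localization W) m δ' ∧
      ∀ β : M, δ' (LocalizedModule.mkLinearMap W M β)
        = LocalizedModule.mkLinearMap W N (δ β) :=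
  existsUnique_localized_diffOp_general W (instAM := instAM) (instAN := instAN) δ hδ
end

section
/- Let R = ℚ[x,y,z] and I = (x²y, x²z, xy², xyz²). A polynomial f ∈ R lies in I if and only if: f vanishes on V(x) (i.e., f ∈ (x)), f vanishes on V(y,z) (i.e., f ∈ (y,z)), ∂f/∂x ∈ (x,y), and both ∂²f/∂x∂y and ∂³f/∂x∂y∂z lie in (x,y,z). -/
/-!
Every condition is a condition on the monomials of `f`. The ideal `I` is monomial, so `f ∈ I`
iff `f` has no standard monomial of `I`, i.e. no monomial `x^a y^b z^c` dominating none of the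
generators. The ideals `(x)`, `(y,z)`, `(x,y)`, `(x,y,z)` are spanned by variables, and over `ℚ`
a partial derivative only shifts exponents and rescales coefficients by nonzero integers, so the
five conditions say that the coefficients of `f` vanish at the exponents with `a = 0`, with
`b = c = 0`, of the form `(1,0,c)`, at `(1,1,0)` and at `(1,1,1)` respectively. These sets
together are exactly the standard exponents of `I`.
-/

open MvPolynomial

namespace MvPolynomial

variable {σ R : Type*} [CommSemiring R]

theorem forall_mem_support_iff {p : MvPolynomial σ R} {Q : (σ →₀ ℕ) → Prop} :
    (∀ m ∈ p.support, Q m) ↔ ∀ m, ¬Q m → coeff m p = 0 := by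
  simp only [mem_support_iff]
  exact forall_congr' fun _ => not_imp_comm

theorem mem_ideal_span_X_image_iff_coeff {p : MvPolynomial σ R} {s : Set σ} :
    p ∈ Ideal.span (X '' s) ↔ ∀ m : σ →₀ ℕ, (∀ i ∈ s, m i = 0) → coeff m p = 0 := by
  rw [mem_ideal_span_X_image, forall_mem_support_iff]
  simp only [not_exists, not_and, not_not]

theorem coeff_pderiv_eq_zero_iff [CharZero R] [NoZeroDivisors R] {i : σ}
    {p : MvPolynomial σ R} {m : σ →₀ ℕ} :
    coeff m (pderiv i p) = 0 ↔ coeff (m + Finsupp.single i 1) p = 0 := by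
  rw [coeff_pderiv, mul_eq_zero, or_iff_left (Nat.cast_add_one_ne_zero _)]

end MvPolynomial

noncomputable def vec3 (a b c : ℕ) : Fin 3 →₀ ℕ := Finsupp.equivFunOnFinite.symm ![a, b, c]

section vec3

variable {a b c a' b' c' : ℕ}

@[simp] theorem vec3_apply_zero : vec3 a b c 0 = a := rfl

@[simp] theorem vec3_apply_one : vec3 a b c 1 = b := rfl

@[simp] theorem vec3_apply_two : vec3 a b c 2 = c := rfl

theorem eq_vec3 (m : Fin 3 →₀ ℕ) : m = vec3 (m 0) (m 1) (m 2) := by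
  ext i; fin_cases i <;> rfl

theorem forall_finsupp_fin_three {P : (Fin 3 →₀ ℕ) → Prop} :
    (∀ m, P m) ↔ ∀ a b c, P (vec3 a b c) :=
  ⟨fun h _ _ _ => h _, fun h m => eq_vec3 m ▸ h _ _ _⟩

@[simp] theorem vec3_le_vec3 : vec3 a b c ≤ vec3 a' b' c' ↔ a ≤ a' ∧ b ≤ b' ∧ c ≤ c' := by
  simp [Finsupp.le_def, Fin.forall_fin_succ]

@[simp] theorem vec3_add_single_zero : vec3 a b c + Finsupp.single 0 1 = vec3 (a + 1) b c := by
  ext i; fin_cases i <;> simp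

@[simp] theorem vec3_add_single_one : vec3 a b c + Finsupp.single 1 1 = vec3 a (b + 1) c := by
  ext i; fin_cases i <;> simp

@[simp] theorem vec3_add_single_two : vec3 a b c + Finsupp.single 2 1 = vec3 a b (c + 1) := by
  ext i; fin_cases i <;> simp

theorem X_pow_mul_X_pow_mul_X_pow {R : Type*} [CommSemiring R] :
    (X 0 ^ a * X 1 ^ b * X 2 ^ c : MvPolynomial (Fin 3) R) = monomial (vec3 a b c) 1 := by
  have hexp : Finsupp.single 0 a + Finsupp.single 1 b + Finsupp.single 2 c = vec3 a b c := by
    ext i; fin_cases i <;> simp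
  simp only [X_pow_eq_monomial, monomial_mul, mul_one, hexp]

end vec3

theorem forall_standard_exponent_iff (φ : ℕ → ℕ → ℕ → Prop) :
    (∀ a b c, ¬(2 ≤ a ∧ 1 ≤ b ∨ 2 ≤ a ∧ 1 ≤ c ∨ 1 ≤ a ∧ 2 ≤ b ∨ 1 ≤ a ∧ 1 ≤ b ∧ 2 ≤ c) →
      φ a b c) ↔
      (∀ b c, φ 0 b c) ∧ (∀ a, φ a 0 0) ∧ (∀ c, φ 1 0 c) ∧ φ 1 1 0 ∧ φ 1 1 1 := by
  refine ⟨fun h => ⟨fun b c => h 0 b c (by omega), fun a => h a 0 0 (by omega),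
    fun c => h 1 0 c (by omega), h 1 1 0 (by omega), h 1 1 1 (by omega)⟩, ?_⟩
  rintro ⟨h0, h00, h10, h110, h111⟩ a b c hstd
  obtain rfl | ⟨rfl, rfl⟩ | ⟨rfl, rfl⟩ | ⟨rfl, rfl, rfl⟩ | ⟨rfl, rfl, rfl⟩ :
      a = 0 ∨ (b = 0 ∧ c = 0) ∨ (a = 1 ∧ b = 0) ∨ (a = 1 ∧ b = 1 ∧ c = 0) ∨
        (a = 1 ∧ b = 1 ∧ c = 1) := by omega
  exacts [h0 b c, h00 a, h10 c, h110, h111]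

/-- in `R = ℚ[x,y,z]` with `I = (x²y, x²z, xy², xyz²)`, a polynomial
`f` lies in `I` if and only if `f ∈ (x)`, `f ∈ (y,z)`, `∂f/∂x ∈ (x,y)`, and both
`∂²f/∂x∂y` and `∂³f/∂x∂y∂z` lie in `(x,y,z)`. -/
theorem differential_membership_example :
    let R := MvPolynomial (Fin 3) ℚ
    let x : R := MvPolynomial.X 0
    let y : R := MvPolynomial.X 1
    let z : R := MvPolynomial.X 2
    let I : Ideal R := Ideal.span {x^2*y, x^2*z, x*y^2, x*y*z^2}
    ∀ f : R,
      f ∈ I ↔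
        f ∈ Ideal.span {x} ∧
        f ∈ Ideal.span {y, z} ∧
        MvPolynomial.pderiv 0 f ∈ Ideal.span {x, y} ∧
        MvPolynomial.pderiv 1 (MvPolynomial.pderiv 0 f) ∈ Ideal.span {x, y, z} ∧
        MvPolynomial.pderiv 2 (MvPolynomial.pderiv 1 (MvPolynomial.pderiv 0 f))
          ∈ Ideal.span {x, y, z} := by
  dsimp only
  intro f
  have hI : Ideal.span {X 0 ^ 2 * X 1, X 0 ^ 2 * X 2, X 0 * X 1 ^ 2, X 0 * X 1 * X 2 ^ 2} =
      Ideal.span ((monomial · (1 : ℚ)) '' {vec3 2 1 0, vec3 2 0 1, vec3 1 2 0, vec3 1 1 2}) := by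
    simp only [Set.image_insert_eq, Set.image_singleton, ← X_pow_mul_X_pow_mul_X_pow]
    ring_nf
  rw [hI, mem_ideal_span_monomial_image, forall_mem_support_iff]
  simp only [← Set.image_singleton (f := (X : Fin 3 → MvPolynomial (Fin 3) ℚ)),
    ← Set.image_insert_eq (f := (X : Fin 3 → MvPolynomial (Fin 3) ℚ)),
    mem_ideal_span_X_image_iff_coeff, coeff_pderiv_eq_zero_iff, forall_finsupp_fin_three,
    vec3_add_single_zero, vec3_add_single_one, vec3_add_single_two, vec3_apply_zero,
    vec3_apply_one, vec3_apply_two, vec3_le_vec3, Set.mem_insert_iff, Set.mem_singleton_iff,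
    forall_eq_or_imp, forall_eq, exists_eq_or_imp, exists_eq_left, zero_le, and_true, true_and,
    and_imp]
  rw [forall_standard_exponent_iff (fun a b c => coeff (vec3 a b c) f = 0)]
  grind
end

section
/- In R = ℚ[x,y,z], a polynomial f belongs to the primary ideal Q = (y², z², y − xz) if and only if f ∈ (y,z) and x·∂f/∂y + ∂f/∂z ∈ (y,z). -/
noncomputable section Palamodov

open MvPolynomial

private abbrev RR := MvPolynomial (Fin 3) ℚ

private def φ : RR →ₐ[ℚ] RR := aeval ![X 0, 0, 0]

private lemma phi_X0 : φ (X 0) = X 0 := by simp [φ]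
private lemma phi_X1 : φ (X 1) = 0 := by simp [φ]
private lemma phi_X2 : φ (X 2) = 0 := by simp [φ]

private lemma sub_phi_mem (f : RR) :
    f - φ f ∈ Ideal.span {(X 1 : RR), X 2} := by
  induction f using MvPolynomial.induction_on with
  | C a => simp [φ]
  | add p q hp hq =>
      have h : p + q - φ (p + q) = (p - φ p) + (q - φ q) := by
        rw [map_add]; ring
      rw [h]; exact Ideal.add_mem _ hp hq
  | mul_X p n hp =>
      fin_cases n
      · show p * X 0 - φ (p * X 0) ∈ Ideal.span {(X 1 : RR), X 2}
        have h : p * X 0 - φ (p * X 0) = (p - φ p) * X 0 := by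
          rw [map_mul, phi_X0]; ring
        rw [h]; exact Ideal.mul_mem_right _ _ hp
      · show p * X 1 - φ (p * X 1) ∈ Ideal.span {(X 1 : RR), X 2}
        have h : p * X 1 - φ (p * X 1) = p * X 1 := by
          rw [map_mul, phi_X1]; ring
        rw [h]
        exact Ideal.mul_mem_left _ _ (Ideal.subset_span (by simp))
      · show p * X 2 - φ (p * X 2) ∈ Ideal.span {(X 1 : RR), X 2}
        have h : p * X 2 - φ (p * X 2) = p * X 2 := by
          rw [map_mul, phi_X2]; ring
        rw [h]
        exact Ideal.mul_mem_left _ _ (Ideal.subset_span (by simp))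

private lemma phi_eq_zero {f : RR} (hf : f ∈ Ideal.span {(X 1 : RR), X 2}) :
    φ f = 0 := by
  rw [Ideal.mem_span_pair] at hf
  obtain ⟨a, b, rfl⟩ := hf
  simp [phi_X1, phi_X2]

private lemma mem_span_iff (f : RR) :
    f ∈ Ideal.span {(X 1 : RR), X 2} ↔ φ f = 0 := by
  refine ⟨phi_eq_zero, fun h => ?_⟩
  have := sub_phi_mem f
  rwa [h, sub_zero] at this

private lemma taylor (f : RR) :
    f - φ f - φ (pderiv 1 f) * X 1 - φ (pderiv 2 f) * X 2 ∈
      Ideal.span {(X 1 : RR)^2, X 1 * X 2, X 2^2} := by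
  have h11 : (X 1 : RR)^2 ∈ Ideal.span {(X 1 : RR)^2, X 1 * X 2, X 2^2} :=
    Ideal.subset_span (by simp)
  have h12 : (X 1 : RR) * X 2 ∈ Ideal.span {(X 1 : RR)^2, X 1 * X 2, X 2^2} :=
    Ideal.subset_span (by simp)
  have h22 : (X 2 : RR)^2 ∈ Ideal.span {(X 1 : RR)^2, X 1 * X 2, X 2^2} :=
    Ideal.subset_span (by simp)
  induction f using MvPolynomial.induction_on with
  | C a => simp [φ]
  | add p q hp hq =>
      have h : p + q - φ (p + q) - φ (pderiv 1 (p + q)) * X 1 - φ (pderiv 2 (p + q)) * X 2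
          = (p - φ p - φ (pderiv 1 p) * X 1 - φ (pderiv 2 p) * X 2)
          + (q - φ q - φ (pderiv 1 q) * X 1 - φ (pderiv 2 q) * X 2) := by
        rw [map_add (pderiv 1), map_add (pderiv 2), map_add, map_add, map_add]; ring
      rw [h]; exact Ideal.add_mem _ hp hq
  | mul_X p n hp =>
      have hpm := sub_phi_mem p
      rw [Ideal.mem_span_pair] at hpm
      obtain ⟨a, b, hab⟩ := hpm
      fin_cases n
      · show p * X 0 - φ (p * X 0) - φ (pderiv 1 (p * X 0)) * X 1
            - φ (pderiv 2 (p * X 0)) * X 2 ∈ Ideal.span {(X 1 : RR)^2, X 1 * X 2, X 2^2}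
        have h : p * X 0 - φ (p * X 0) - φ (pderiv 1 (p * X 0)) * X 1
            - φ (pderiv 2 (p * X 0)) * X 2
            = (p - φ p - φ (pderiv 1 p) * X 1 - φ (pderiv 2 p) * X 2) * X 0 := by
          rw [pderiv_mul, pderiv_mul, pderiv_X_of_ne (by decide), pderiv_X_of_ne (by decide)]
          simp only [map_mul, map_add, phi_X0, mul_zero, map_zero, zero_mul, add_zero]
          ring
        rw [h]; exact Ideal.mul_mem_right _ _ hp
      · show p * X 1 - φ (p * X 1) - φ (pderiv 1 (p * X 1)) * X 1
            - φ (pderiv 2 (p * X 1)) * X 2 ∈ Ideal.span {(X 1 : RR)^2, X 1 * X 2, X 2^2}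
        have h : p * X 1 - φ (p * X 1) - φ (pderiv 1 (p * X 1)) * X 1
            - φ (pderiv 2 (p * X 1)) * X 2
            = a * (X 1)^2 + b * (X 1 * X 2) := by
          rw [pderiv_mul, pderiv_mul, pderiv_X_self, pderiv_X_of_ne (by decide)]
          simp only [map_mul, map_add, phi_X1, mul_zero, map_zero, zero_mul, add_zero,
            mul_one, zero_add]
          linear_combination (-(X 1 : RR)) * hab
        rw [h]
        exact Ideal.add_mem _ (Ideal.mul_mem_left _ _ h11) (Ideal.mul_mem_left _ _ h12)
      · show p * X 2 - φ (p * X 2) - φ (pderiv 1 (p * X 2)) * X 1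
            - φ (pderiv 2 (p * X 2)) * X 2 ∈ Ideal.span {(X 1 : RR)^2, X 1 * X 2, X 2^2}
        have h : p * X 2 - φ (p * X 2) - φ (pderiv 1 (p * X 2)) * X 1
            - φ (pderiv 2 (p * X 2)) * X 2
            = a * (X 1 * X 2) + b * (X 2)^2 := by
          rw [pderiv_mul, pderiv_mul, pderiv_X_self, pderiv_X_of_ne (by decide)]
          simp only [map_mul, map_add, phi_X2, mul_zero, map_zero, zero_mul, add_zero,
            mul_one, zero_add]
          linear_combination (-(X 2 : RR)) * hab
        rw [h]
        exact Ideal.add_mem _ (Ideal.mul_mem_left _ _ h12) (Ideal.mul_mem_left _ _ h22)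

end Palamodov

open MvPolynomial

/-- Palamodov's example: in `R = ℚ[x,y,z]`, a polynomial `f` belongs to
the `(y,z)`-primary ideal `Q = (y², z², y − xz)` if and only if `f ∈ (y,z)` and
`x·∂f/∂y + ∂f/∂z ∈ (y,z)`. -/
theorem palamodov_membership :
    let R := MvPolynomial (Fin 3) ℚ
    let x : R := MvPolynomial.X 0
    let y : R := MvPolynomial.X 1
    let z : R := MvPolynomial.X 2
    let Q : Ideal R := Ideal.span {y^2, z^2, y - x*z}
    ∀ f : R,
      f ∈ Q ↔
        f ∈ Ideal.span {y, z} ∧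
        x * MvPolynomial.pderiv 1 f + MvPolynomial.pderiv 2 f ∈ Ideal.span {y, z} := by
  intro R x y z Q f
  show f ∈ Ideal.span {(X 1 : RR)^2, (X 2 : RR)^2, X 1 - X 0 * X 2} ↔
      f ∈ Ideal.span {(X 1 : RR), X 2} ∧
      X 0 * pderiv 1 f + pderiv 2 f ∈ Ideal.span {(X 1 : RR), X 2}
  have hy : (X 1 : RR) ∈ Ideal.span {(X 1 : RR), X 2} := Ideal.subset_span (by simp)
  have hz : (X 2 : RR) ∈ Ideal.span {(X 1 : RR), X 2} := Ideal.subset_span (by simp)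
  have hQy2 : (X 1 : RR)^2 ∈ Ideal.span {(X 1 : RR)^2, (X 2 : RR)^2, X 1 - X 0 * X 2} :=
    Ideal.subset_span (by simp)
  have hQz2 : (X 2 : RR)^2 ∈ Ideal.span {(X 1 : RR)^2, (X 2 : RR)^2, X 1 - X 0 * X 2} :=
    Ideal.subset_span (by simp)
  have hQl : (X 1 : RR) - X 0 * X 2 ∈ Ideal.span {(X 1 : RR)^2, (X 2 : RR)^2, X 1 - X 0 * X 2} :=
    Ideal.subset_span (by simp)
  have e10 : pderiv 1 (X 0 : RR) = 0 := pderiv_X_of_ne (by decide)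
  have e20 : pderiv 2 (X 0 : RR) = 0 := pderiv_X_of_ne (by decide)
  have e11 : pderiv 1 (X 1 : RR) = 1 := pderiv_X_self 1
  have e21 : pderiv 2 (X 1 : RR) = 0 := pderiv_X_of_ne (by decide)
  have e12 : pderiv 1 (X 2 : RR) = 0 := pderiv_X_of_ne (by decide)
  have e22 : pderiv 2 (X 2 : RR) = 1 := pderiv_X_self 2
  constructor
  · -- forward
    intro hf
    refine Submodule.span_induction ?_ ?_ ?_ ?_ hf
    · rintro g hg
      simp only [Set.mem_insert_iff, Set.mem_singleton_iff] at hg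
      rcases hg with rfl | rfl | rfl
      · refine ⟨by rw [sq]; exact Ideal.mul_mem_left _ _ hy, ?_⟩
        have h : X 0 * pderiv 1 ((X 1 : RR)^2) + pderiv 2 ((X 1 : RR)^2)
            = (X 0 * 2) * X 1 := by
          rw [sq, pderiv_mul, pderiv_mul, e11, e21]; ring
        rw [h]; exact Ideal.mul_mem_left _ _ hy
      · refine ⟨by rw [sq]; exact Ideal.mul_mem_left _ _ hz, ?_⟩
        have h : X 0 * pderiv 1 ((X 2 : RR)^2) + pderiv 2 ((X 2 : RR)^2)
            = 2 * X 2 := by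
          rw [sq, pderiv_mul, pderiv_mul, e12, e22]; ring
        rw [h]; exact Ideal.mul_mem_left _ _ hz
      · refine ⟨Ideal.sub_mem _ hy (Ideal.mul_mem_left _ _ hz), ?_⟩
        have h : X 0 * pderiv 1 ((X 1 : RR) - X 0 * X 2) + pderiv 2 ((X 1 : RR) - X 0 * X 2)
            = 0 := by
          rw [map_sub, map_sub, pderiv_mul, pderiv_mul, e11, e21, e10, e20, e12, e22]; ring
        rw [h]; exact Ideal.zero_mem _
    · simp
    · rintro g h - - ⟨hg1, hg2⟩ ⟨hh1, hh2⟩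
      refine ⟨Ideal.add_mem _ hg1 hh1, ?_⟩
      have heq : X 0 * pderiv 1 (g + h) + pderiv 2 (g + h)
          = (X 0 * pderiv 1 g + pderiv 2 g) + (X 0 * pderiv 1 h + pderiv 2 h) := by
        rw [map_add (pderiv 1), map_add (pderiv 2)]; ring
      rw [heq]; exact Ideal.add_mem _ hg2 hh2
    · rintro r g - ⟨hg1, hg2⟩
      rw [smul_eq_mul]
      refine ⟨Ideal.mul_mem_left _ _ hg1, ?_⟩
      have heq : X 0 * pderiv 1 (r * g) + pderiv 2 (r * g)
          = r * (X 0 * pderiv 1 g + pderiv 2 g) + (X 0 * pderiv 1 r + pderiv 2 r) * g := by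
        rw [pderiv_mul, pderiv_mul]; ring
      rw [heq]
      exact Ideal.add_mem _ (Ideal.mul_mem_left _ _ hg2) (Ideal.mul_mem_left _ _ hg1)
  · -- backward
    rintro ⟨hf1, hf2⟩
    have hφf : φ f = 0 := phi_eq_zero hf1
    have hφD : φ (X 0 * pderiv 1 f + pderiv 2 f) = 0 := phi_eq_zero hf2
    rw [map_add, map_mul, phi_X0] at hφD
    have hc : φ (pderiv 2 f) = -(X 0 * φ (pderiv 1 f)) := by linear_combination hφD
    have hyz : (X 1 : RR) * X 2 ∈ Ideal.span {(X 1 : RR)^2, (X 2 : RR)^2, X 1 - X 0 * X 2} := by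
      have heq : (X 1 : RR) * X 2 = X 2 * (X 1 - X 0 * X 2) + X 0 * (X 2)^2 := by ring
      rw [heq]
      exact Ideal.add_mem _ (Ideal.mul_mem_left _ _ hQl) (Ideal.mul_mem_left _ _ hQz2)
    have hP2 : Ideal.span {(X 1 : RR)^2, X 1 * X 2, X 2^2} ≤
        Ideal.span {(X 1 : RR)^2, (X 2 : RR)^2, X 1 - X 0 * X 2} := by
      rw [Ideal.span_le]
      rintro g hg
      simp only [Set.mem_insert_iff, Set.mem_singleton_iff] at hg
      rcases hg with rfl | rfl | rfl
      · exact hQy2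
      · exact hyz
      · exact hQz2
    have ht := taylor f
    rw [hφf, sub_zero] at ht
    have hQt : f - φ (pderiv 1 f) * X 1 - φ (pderiv 2 f) * X 2 ∈
        Ideal.span {(X 1 : RR)^2, (X 2 : RR)^2, X 1 - X 0 * X 2} := hP2 ht
    have hrest : φ (pderiv 1 f) * X 1 + φ (pderiv 2 f) * X 2 ∈
        Ideal.span {(X 1 : RR)^2, (X 2 : RR)^2, X 1 - X 0 * X 2} := by
      have heq : φ (pderiv 1 f) * X 1 + φ (pderiv 2 f) * X 2
          = φ (pderiv 1 f) * (X 1 - X 0 * X 2) := by rw [hc]; ring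
      rw [heq]
      exact Ideal.mul_mem_left _ _ hQl
    have hsum : f = (f - φ (pderiv 1 f) * X 1 - φ (pderiv 2 f) * X 2)
        + (φ (pderiv 1 f) * X 1 + φ (pderiv 2 f) * X 2) := by ring
    rw [hsum]
    exact Ideal.add_mem _ hQt hrest
end

section
/- Let p be a prime, K = F_p(t), R = K[x], and p = (x^p − t), a maximal ideal of R. Then every K-linear differential operator on R of order ≤ p−1 maps p into p. Consequently, for any finite set 𝔄 of K-linear differential operators on R of order ≤ p−1, the set {f ∈ R : δ(f) ∈ p for all δ ∈ 𝔄} contains p and hence cannot equal p². -/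
section Commutator

variable {R A : Type*} [CommRing R] [CommRing A] [Algebra A R]

section Precomp

variable (A) (M N : Type*) [AddCommGroup M] [Module R M] [Module A M] [IsScalarTower A R M]
  [AddCommGroup N] [Module A N]

noncomputable def precompSMul (r : R) : Module.End A (M →ₗ[A] N) :=
  LinearMap.lcomp A N (Algebra.lsmul A A M r)

lemma precompSMul_pow (r : R) (n : ℕ) : precompSMul A M N r ^ n = precompSMul A M N (r ^ n) := by
  induction n with
  | zero => ext; simp [precompSMul]
  | succ n ih =>
    rw [pow_succ, ih]
    ext
    simp only [precompSMul, Module.End.mul_apply, LinearMap.lcomp_apply, Algebra.lsmul_apply,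
      pow_succ', mul_smul]

end Precomp

section Postcomp

variable (A) (M N : Type*) [AddCommGroup M] [Module A M]
  [AddCommGroup N] [Module R N] [Module A N] [IsScalarTower A R N]

noncomputable def postcompSMul (r : R) : Module.End A (M →ₗ[A] N) :=
  LinearMap.compRight A (Algebra.lsmul A A N r)

lemma postcompSMul_pow (r : R) (n : ℕ) :
    postcompSMul A M N r ^ n = postcompSMul A M N (r ^ n) := by
  induction n with
  | zero => ext; simp [postcompSMul]
  | succ n ih =>
    rw [pow_succ, ih]
    ext
    simp only [postcompSMul, Module.End.mul_apply, LinearMap.compRight_apply,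
      LinearMap.comp_apply, Algebra.lsmul_apply, pow_succ, mul_smul]

end Postcomp

variable {M N : Type*} [AddCommGroup M] [Module R M] [AddCommGroup N] [Module R N]
  [Module A M] [Module A N] [IsScalarTower A R M] [IsScalarTower A R N]

variable (A M N) in
noncomputable def adSMul (r : R) : Module.End A (M →ₗ[A] N) :=
  precompSMul A M N r - postcompSMul A M N r

lemma adSMul_apply (r : R) (δ : M →ₗ[A] N) : adSMul A M N r δ = commutatorSMul δ r := rfl

lemma commute_precompSMul_postcompSMul (r s : R) :
    Commute (precompSMul A M N r) (postcompSMul A M N s) := by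
  ext; simp [precompSMul, postcompSMul]

lemma adSMul_pow_prime (p : ℕ) [Fact p.Prime] [CharP A p] (r : R) :
    adSMul A M N r ^ p = adSMul A M N (r ^ p) := by
  have hp : (p : Module.End A (M →ₗ[A] N)) = 0 := by
    rw [← map_natCast (algebraMap A _), CharP.cast_eq_zero, map_zero]
  have hc : Commute (adSMul A M N r) (postcompSMul A M N r) :=
    (commute_precompSMul_postcompSMul r r).sub_left (Commute.refl _)
  -- Frobenius for the commuting pair `adSMul r`, `postcompSMul r`, whose sum is `precompSMul r`.
  have h := hc.add_pow_prime_eq (Fact.out : p.Prime)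
  rw [hp, zero_mul, zero_mul, zero_mul, add_zero, adSMul, sub_add_cancel, precompSMul_pow,
    postcompSMul_pow] at h
  unfold adSMul
  rw [h, add_sub_cancel_right]

lemma commutatorSMul_eq_zero_of_isDiffOp_zero {δ : M →ₗ[A] N} (h : IsDiffOp R 0 δ) (r : R) :
    commutatorSMul δ r = 0 := by
  ext w
  simp [commutatorSMul, h r w]

lemma IsDiffOp.adSMul_pow_apply_eq_zero {m : ℕ} {δ : M →ₗ[A] N} (h : IsDiffOp R m δ) (r : R) :
    (adSMul A M N r ^ (m + 1)) δ = 0 := by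
  induction m generalizing δ with
  | zero => rw [pow_one, adSMul_apply, commutatorSMul_eq_zero_of_isDiffOp_zero h]
  | succ m ih => rw [pow_succ, Module.End.mul_apply, adSMul_apply]; exact ih (h r)

lemma IsDiffOp.commutatorSMul_pow_prime_eq_zero (p : ℕ) [Fact p.Prime] [CharP A p]
    {δ : M →ₗ[A] N} (h : IsDiffOp R (p - 1) δ) (r : R) : commutatorSMul δ (r ^ p) = 0 := by
  have := h.adSMul_pow_apply_eq_zero r
  rwa [Nat.sub_add_cancel (Fact.out : p.Prime).one_le, adSMul_pow_prime, adSMul_apply] at this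

lemma commutatorSMul_algebraMap (δ : M →ₗ[A] N) (a : A) :
    commutatorSMul δ (algebraMap A R a) = 0 := by
  ext w
  simp [commutatorSMul, algebraMap_smul]

lemma commutatorSMul_sub (δ : M →ₗ[A] N) (r s : R) :
    commutatorSMul δ (r - s) = commutatorSMul δ r - commutatorSMul δ s := by
  ext w
  simp only [commutatorSMul, LinearMap.coe_mk, AddHom.coe_mk, LinearMap.sub_apply, sub_smul,
    map_sub]
  abel

lemma map_smul_of_commutatorSMul_eq_zero {δ : M →ₗ[A] N} {r : R} (h : commutatorSMul δ r = 0)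
    (w : M) : δ (r • w) = r • δ w :=
  sub_eq_zero.mp (LinearMap.congr_fun h w)

lemma IsDiffOp.commutatorSMul_pow_sub_algebraMap_eq_zero (p : ℕ) [Fact p.Prime] [CharP A p]
    {δ : M →ₗ[A] N} (h : IsDiffOp R (p - 1) δ) (r : R) (a : A) :
    commutatorSMul δ (r ^ p - algebraMap A R a) = 0 := by
  rw [commutatorSMul_sub, h.commutatorSMul_pow_prime_eq_zero p, commutatorSMul_algebraMap,
    sub_zero]

end Commutator

lemma map_mem_span_singleton_of_commutatorSMul_eq_zero {A R : Type*} [CommRing A] [CommRing R]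
    [Algebra A R] {δ : R →ₗ[A] R} {g : R} (h : commutatorSMul δ g = 0) {f : R}
    (hf : f ∈ Ideal.span {g}) : δ f ∈ Ideal.span {g} := by
  obtain ⟨c, rfl⟩ := Ideal.mem_span_singleton.mp hf
  rw [← smul_eq_mul, map_smul_of_commutatorSMul_eq_zero h, smul_eq_mul]
  exact Ideal.mul_mem_right _ _ (Ideal.mem_span_singleton_self g)

lemma self_notMem_span_singleton_pow_two {S : Type*} [CommRing S] [IsDomain S] {g : S}
    (h0 : g ≠ 0) (hu : ¬IsUnit g) : g ∉ Ideal.span {g} ^ 2 := by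
  rw [Ideal.span_singleton_pow, Ideal.mem_span_singleton, sq]
  intro hdvd
  exact hu (isUnit_of_dvd_one ((mul_dvd_mul_iff_left h0).mp (by rwa [mul_one])))

open Polynomial in
/-- let `K = 𝔽_p(t)`, `R = K[x]` and `𝔭 = (x^p − t)`, a maximal ideal of
`R`.  Every `K`-linear differential operator on `R` of order `≤ p−1` maps `𝔭` into
`𝔭`.  Consequently, for any finite set `𝔄` of `K`-linear differential operators of
order `≤ p−1`, the set `{f : δ(f) ∈ 𝔭 ∀ δ ∈ 𝔄}` contains `𝔭`, hence cannot equal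
`𝔭²`. -/
theorem inseparable_example (p : ℕ) [Fact p.Prime] :
    let K := RatFunc (ZMod p)
    let t : K := RatFunc.X
    let P : Ideal (Polynomial K) := Ideal.span {Polynomial.X ^ p - Polynomial.C t}
    (∀ δ : Polynomial K →ₗ[K] Polynomial K,
      IsDiffOp (Polynomial K) (p - 1) δ → ∀ f ∈ P, δ f ∈ P) ∧
    (∀ 𝔄 : Finset (Polynomial K →ₗ[K] Polynomial K),
      (∀ δ ∈ 𝔄, IsDiffOp (Polynomial K) (p - 1) δ) →
        (∀ f ∈ P, ∀ δ ∈ 𝔄, δ f ∈ P) ∧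
        {f : Polynomial K | ∀ δ ∈ 𝔄, δ f ∈ P} ≠ ((P ^ 2 : Ideal (Polynomial K)) : Set (Polynomial K))) := by
  intro K t P
  have hp : 0 < p := (Fact.out : p.Prime).pos
  have hmaps (δ : K[X] →ₗ[K] K[X]) (hδ : IsDiffOp K[X] (p - 1) δ) (f : K[X]) (hf : f ∈ P) :
      δ f ∈ P := by
    have hcomm := hδ.commutatorSMul_pow_sub_algebraMap_eq_zero p X t
    rw [algebraMap_eq] at hcomm
    exact map_mem_span_singleton_of_commutatorSMul_eq_zero hcomm hf
  have hg : X ^ p - C t ∉ P ^ 2 := self_notMem_span_singleton_pow_two (X_pow_sub_C_ne_zero hp t)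
    (not_isUnit_of_natDegree_pos _ (natDegree_X_pow_sub_C (R := K) ▸ hp))
  refine ⟨hmaps, fun 𝔄 h𝔄 => ⟨fun f hf δ hδ => hmaps δ (h𝔄 δ hδ) f hf, fun hEq => hg ?_⟩⟩
  have hgP : X ^ p - C t ∈ {f : K[X] | ∀ δ ∈ 𝔄, δ f ∈ P} :=
    fun δ hδ => hmaps δ (h𝔄 δ hδ) _ (Ideal.mem_span_singleton_self _)
  rwa [hEq] at hgP
end

section
/- In R = ℚ[x,y,z], consider M = R² and the submodule U generated by the columns (x², y²), (xy, yz), (xz, z²). Then U = U₁ ∩ U₂ ∩ U₃, where U₁ is generated by (0,1) and (x,0); U₂ is generated by (x,z), (y², z²), and (0, xz − y²); and U₃ is generated by (1,0), (0,y²), (0,yz), (0,z²). Moreover the associated primes of M/U are (x), (xz − y²), and (y,z). -/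
/-!
`U₁`, `U₂`, `U₃` are the preimages of the ideals `(x)`, `(xz - y²)` and `(y, z)²` of `R` under the
linear forms `(F, G) ↦ F`, `(F, G) ↦ zF - xG` and `(F, G) ↦ G`. Preimages of primary ideals are
primary submodules, so the `Uᵢ` are primary with radicals `(x)`, `(xz - y²)`, `(y, z)`: here
`xz - y²` is prime since, as a polynomial in `x` over `K[y, z]`, it is primitive of degree one, and
`(y, z)²` is primary by the first-order Taylor criterion along the `x`-axis. Once
`U = U₁ ∩ U₂ ∩ U₃` is checked and no `Uᵢ` contains the intersection of the other two, the first
uniqueness theorem for primary decomposition identifies the associated primes of `M / U` with the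
three radicals.
-/

namespace Submodule

variable {R M M' : Type*} [CommRing R] [AddCommGroup M] [Module R M] [AddCommGroup M']
  [Module R M']

theorem colon_bot_mk_singleton (N : Submodule R M) (m : M) :
    (⊥ : Submodule R (M ⧸ N)).colon {N.mkQ m} = N.colon {m} := by
  ext r
  simp [mem_colon_singleton, ← Quotient.mk_smul, Quotient.mk_eq_zero]

theorem associatedPrimes_quotient (N : Submodule R M) :
    associatedPrimes R (M ⧸ N) = N.associatedPrimes := by
  ext I
  simp only [associatedPrimes, IsAssociatedPrime, Submodule.associatedPrimes, Set.mem_ofPred_eq,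
    Submodule.isAssociatedPrime_def, N.mkQ_surjective.exists, colon_bot_mk_singleton]

theorem IsPrimary.comap {S : Submodule R M'} (hS : S.IsPrimary) (f : M →ₗ[R] M') {m₀ : M}
    (hm₀ : f m₀ ∉ S) : (S.comap f).IsPrimary := by
  refine ⟨fun h => hm₀ (eq_top_iff'.mp h m₀), fun {r m} hrm => ?_⟩
  rw [mem_comap, map_smul] at hrm
  refine (hS.2 hrm).imp id fun ⟨n, hn⟩ => ⟨n, ?_⟩
  rw [← mem_colon_iff_le] at hn ⊢
  simp only [mem_colon, top_coe, Set.mem_univ, mem_comap, map_smul, forall_const] at hn ⊢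
  exact fun m => hn (f m)

theorem comap_colon_singleton (S : Submodule R M') (f : M →ₗ[R] M') (m : M) :
    (S.comap f).colon {m} = S.colon {f m} := by
  ext r
  simp [mem_colon_singleton]

theorem IsPrimary.radical_colon_comap {S : Submodule R M'} (hS : S.IsPrimary) (f : M →ₗ[R] M')
    {m : M} (hm : f m ∉ S) :
    ((S.comap f).colon Set.univ).radical = (S.colon {f m}).radical := by
  rw [← (hS.comap f hm).radical_colon_singleton_of_notMem hm, comap_colon_singleton]

theorem associatedPrimes_quotient_inf_inf {N₁ N₂ N₃ : Submodule R M} {p₁ p₂ p₃ : Ideal R}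
    (h₁ : N₁.IsPrimary) (h₂ : N₂.IsPrimary) (h₃ : N₃.IsPrimary)
    (hp₁ : (N₁.colon Set.univ).radical = p₁) (hp₂ : (N₂.colon Set.univ).radical = p₂)
    (hp₃ : (N₃.colon Set.univ).radical = p₃) (h₁₂ : p₁ ≠ p₂) (h₁₃ : p₁ ≠ p₃) (h₂₃ : p₂ ≠ p₃)
    (hN₁ : ¬ N₂ ⊓ N₃ ≤ N₁) (hN₂ : ¬ N₁ ⊓ N₃ ≤ N₂) (hN₃ : ¬ N₁ ⊓ N₂ ≤ N₃) :
    associatedPrimes R (M ⧸ (N₁ ⊓ N₂ ⊓ N₃)) = {p₁, p₂, p₃} := by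
  classical
  have ht : (N₁ ⊓ N₂ ⊓ N₃).IsMinimalPrimaryDecomposition {N₁, N₂, N₃} := by
    refine ⟨by simp [inf_assoc], ?_, ?_, ?_⟩
    · simp [h₁, h₂, h₃]
    · simp [Set.pairwise_insert, Function.onFun, hp₁, hp₂, hp₃, h₁₂, h₁₃, h₂₃, h₁₂.symm,
        h₁₃.symm, h₂₃.symm]
    · -- `({N₁, N₂, N₃}.erase Nᵢ).inf id` lies above the intersection of the other two
      simp only [Finset.mem_insert, Finset.mem_singleton]
      rintro J (rfl | rfl | rfl) hle <;> [apply hN₁; apply hN₂; apply hN₃] <;>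
        refine le_trans (Finset.le_inf fun K hK => ?_) hle <;>
        simp only [Finset.mem_erase, Finset.mem_insert, Finset.mem_singleton] at hK <;>
        rcases hK with ⟨hne, rfl | rfl | rfl⟩ <;> first | exact absurd rfl hne | simp
  rw [associatedPrimes_quotient, ← ht.image_radical_eq_associated_primes]
  simp [Set.image_insert_eq, hp₁, hp₂, hp₃]

end Submodule

namespace Ideal

variable {R : Type*} [CommRing R]

theorem colon_singleton_one (I : Ideal R) : I.colon {1} = I := by
  ext r
  simp [Submodule.mem_colon_singleton]

theorem IsPrime.colon_singleton_of_notMem {P : Ideal R} (hP : P.IsPrime) {a : R} (ha : a ∉ P) :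
    P.colon {a} = P := by
  ext r
  rw [Submodule.mem_colon_singleton, smul_eq_mul]
  exact ⟨fun h => (hP.mem_or_mem h).resolve_right ha, fun h => P.mul_mem_right a h⟩

end Ideal

open MvPolynomial

theorem not_dvd_of_map_eq_zero {A B : Type*} [CommSemiring A] [CommSemiring B] (φ : A →+* B)
    {a b : A} (ha : φ a = 0) (hb : φ b ≠ 0) : ¬ a ∣ b :=
  fun h => hb (zero_dvd_iff.mp (ha ▸ map_dvd φ h))

theorem MvPolynomial.sub_aeval_mem {σ R : Type*} [CommRing R] {I : Ideal (MvPolynomial σ R)}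
    {g : σ → MvPolynomial σ R} (hg : ∀ i, X i - g i ∈ I) (f : MvPolynomial σ R) :
    f - aeval g f ∈ I := by
  have : (Ideal.Quotient.mkₐ R I).comp (aeval g) = Ideal.Quotient.mkₐ R I :=
    algHom_ext fun i => by simpa using (Ideal.Quotient.eq.mpr (hg i)).symm
  exact Ideal.Quotient.eq.mp (DFunLike.congr_fun this f).symm

namespace PrimaryDecompositionExample

variable {K : Type*} [Field K]

local notation "K[x,y,z]" => MvPolynomial (Fin 3) K

theorem prime_quadric : Prime (X 0 * X 2 - X 1 ^ 2 : K[x,y,z]) := by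
  have hrel : IsRelPrime (X 1 : MvPolynomial (Fin 2) K) (-X 0 ^ 2) :=
    X_prime.irreducible.isRelPrime_iff_not_dvd.mpr
      (not_dvd_of_map_eq_zero (eval ![1, 0]) (by simp) (by simp))
  have hq : finSuccEquiv K 2 (X 0 * X 2 - X 1 ^ 2) =
      Polynomial.C (X 1) * Polynomial.X + Polynomial.C (-X 0 ^ 2) := by
    rw [show (1 : Fin 3) = Fin.succ 0 from rfl, show (2 : Fin 3) = Fin.succ 1 from rfl, map_sub,
      map_mul, map_pow, finSuccEquiv_X_zero, finSuccEquiv_X_succ, finSuccEquiv_X_succ]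
    simp only [map_neg, map_pow]
    ring
  rw [← UniqueFactorizationMonoid.irreducible_iff_prime,
    ← MulEquiv.irreducible_iff (finSuccEquiv K 2).toMulEquiv]
  exact hq ▸ Polynomial.irreducible_C_mul_X_add_C (X_ne_zero 1) hrel

theorem not_quadric_dvd {f : K[x,y,z]} (hf : eval 1 f ≠ 0) : ¬ X 0 * X 2 - X 1 ^ 2 ∣ f :=
  not_dvd_of_map_eq_zero (eval 1) (by simp) hf

theorem isPrime_span_X_zero : (Ideal.span {X 0} : Ideal K[x,y,z]).IsPrime :=
  (Ideal.span_singleton_prime (X_ne_zero 0)).mpr X_prime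

theorem isPrime_span_quadric : (Ideal.span {X 0 * X 2 - X 1 ^ 2} : Ideal K[x,y,z]).IsPrime :=
  (Ideal.span_singleton_prime prime_quadric.ne_zero).mpr prime_quadric

noncomputable def toXAxis : K[x,y,z] →ₐ[K] K[x,y,z] := aeval ![X 0, 0, 0]

noncomputable def toYZPlane : K[x,y,z] →ₐ[K] K[x,y,z] := aeval ![0, X 1, X 2]

theorem mem_span_X_one_X_two_iff (f : K[x,y,z]) :
    f ∈ Ideal.span {X 1, X 2} ↔ toXAxis f = 0 := by
  refine ⟨fun hf => ?_, fun hf => ?_⟩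
  · obtain ⟨a, b, rfl⟩ := Ideal.mem_span_pair.mp hf
    simp [toXAxis]
  · have h₁ : (X 1 : K[x,y,z]) ∈ Ideal.span {X 1, X 2} := Ideal.subset_span (by simp)
    have h₂ : (X 2 : K[x,y,z]) ∈ Ideal.span {X 1, X 2} := Ideal.subset_span (by simp)
    have h := sub_aeval_mem (I := Ideal.span {X 1, X 2}) (g := ![X 0, 0, 0])
      (fun i => by fin_cases i <;> simp [h₁, h₂]) f
    rwa [show aeval ![X 0, 0, 0] f = toXAxis f from rfl, hf, sub_zero] at h

theorem isPrime_span_X_one_X_two : (Ideal.span {X 1, X 2} : Ideal K[x,y,z]).IsPrime := by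
  have : Ideal.span {X 1, X 2} = RingHom.ker (toXAxis : K[x,y,z] →ₐ[K] K[x,y,z]) := by
    ext f
    exact mem_span_X_one_X_two_iff f
  rw [this]
  exact RingHom.ker_isPrime _

variable (K) in
noncomputable def J : Ideal K[x,y,z] := Ideal.span {X 1 ^ 2, X 1 * X 2, X 2 ^ 2}

theorem mem_J_iff (g : K[x,y,z]) :
    g ∈ J K ↔ toXAxis g = 0 ∧ toXAxis (pderiv 1 g) = 0 ∧ toXAxis (pderiv 2 g) = 0 := by
  refine ⟨fun hg => ?_, fun ⟨h0, h1, h2⟩ => ?_⟩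
  · obtain ⟨a, b, c, rfl⟩ := Submodule.mem_span_triple.mp hg
    simp [toXAxis]
  · obtain ⟨a, b, rfl⟩ := Ideal.mem_span_pair.mp ((mem_span_X_one_X_two_iff g).mpr h0)
    have ha : toXAxis a = 0 := by simpa [toXAxis, pderiv_mul] using h1
    have hb : toXAxis b = 0 := by simpa [toXAxis, pderiv_mul] using h2
    obtain ⟨a₁, a₂, rfl⟩ := Ideal.mem_span_pair.mp ((mem_span_X_one_X_two_iff a).mpr ha)
    obtain ⟨b₁, b₂, rfl⟩ := Ideal.mem_span_pair.mp ((mem_span_X_one_X_two_iff b).mpr hb)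
    exact Submodule.mem_span_triple.mpr ⟨a₁, a₂ + b₁, b₂, by simp only [smul_eq_mul]; ring⟩

theorem J_le_span_X_one_X_two : J K ≤ Ideal.span {X 1, X 2} := fun g hg => by
  rw [mem_span_X_one_X_two_iff]
  exact ((mem_J_iff g).mp hg).1

theorem radical_J : (J K).radical = Ideal.span {X 1, X 2} := by
  refine le_antisymm ?_ ?_
  · simpa [isPrime_span_X_one_X_two.radical] using
      Ideal.radical_mono (J_le_span_X_one_X_two (K := K))
  · rw [Ideal.span_le]
    rintro _ (rfl | rfl) <;> exact ⟨2, Ideal.subset_span (by simp)⟩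

theorem J_isPrimary : (J K).IsPrimary := by
  refine Ideal.isPrimary_iff.mpr ⟨?_, fun {a b} hab => ?_⟩
  · exact ne_top_of_le_ne_top isPrime_span_X_one_X_two.ne_top J_le_span_X_one_X_two
  rw [radical_J]
  by_cases hb : b ∈ Ideal.span {X 1, X 2}
  · exact Or.inr hb
  have cancel : ∀ c, toXAxis c * toXAxis b = 0 → toXAxis c = 0 := fun c h =>
    (mul_eq_zero.mp h).resolve_right ((mem_span_X_one_X_two_iff b).not.mp hb)
  obtain ⟨h0, h1, h2⟩ := (mem_J_iff (a * b)).mp hab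
  have ha : toXAxis a = 0 := cancel a (by simpa only [map_mul] using h0)
  refine Or.inl ((mem_J_iff a).mpr ⟨ha, cancel _ ?_, cancel _ ?_⟩)
  · simpa only [pderiv_mul, map_add, map_mul, ha, zero_mul, add_zero] using h1
  · simpa only [pderiv_mul, map_add, map_mul, ha, zero_mul, add_zero] using h2

variable (K) in
noncomputable def U₁ : Submodule K[x,y,z] (K[x,y,z] × K[x,y,z]) :=
  Submodule.span K[x,y,z] {((0 : K[x,y,z]), (1 : K[x,y,z])), (X 0, 0)}

variable (K) in
noncomputable def U₂ : Submodule K[x,y,z] (K[x,y,z] × K[x,y,z]) :=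
  Submodule.span K[x,y,z] {(X 0, X 2), (X 1 ^ 2, X 2 ^ 2), (0, X 0 * X 2 - X 1 ^ 2)}

variable (K) in
noncomputable def U₃ : Submodule K[x,y,z] (K[x,y,z] × K[x,y,z]) :=
  Submodule.span K[x,y,z]
    {((1 : K[x,y,z]), (0 : K[x,y,z])), (0, X 1 ^ 2), (0, X 1 * X 2), (0, X 2 ^ 2)}

theorem U₁_eq_comap :
    U₁ K = Submodule.comap (LinearMap.fst K[x,y,z] K[x,y,z] K[x,y,z]) (Ideal.span {X 0}) := by
  refine le_antisymm (Submodule.span_le.mpr ?_) fun ⟨F, G⟩ hF => ?_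
  · rintro _ (rfl | rfl) <;> simp
  · obtain ⟨c, rfl⟩ := Ideal.mem_span_singleton.mp hF
    exact Submodule.mem_span_pair.mpr ⟨G, c, Prod.ext (by simp [mul_comm]) (by simp)⟩

theorem U₃_eq_comap :
    U₃ K = Submodule.comap (LinearMap.snd K[x,y,z] K[x,y,z] K[x,y,z]) (J K) := by
  refine le_antisymm (Submodule.span_le.mpr ?_) fun ⟨F, G⟩ hG => ?_
  · rintro _ (rfl | rfl | rfl | rfl)
    exacts [(J K).zero_mem, Ideal.subset_span (by simp), Ideal.subset_span (by simp),
      Ideal.subset_span (by simp)]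
  · obtain ⟨a, b, c, hG⟩ := Submodule.mem_span_triple.mp hG
    exact Submodule.mem_span_insert.mpr ⟨F, (0, G), Submodule.mem_span_triple.mpr
      ⟨a, b, c, Prod.ext (by simp) (by simpa using hG)⟩, by simp⟩


variable (K) in
noncomputable def detXZ : K[x,y,z] × K[x,y,z] →ₗ[K[x,y,z]] K[x,y,z] :=
  (X 2 : K[x,y,z]) • LinearMap.fst K[x,y,z] K[x,y,z] K[x,y,z] -
    (X 0 : K[x,y,z]) • LinearMap.snd K[x,y,z] K[x,y,z] K[x,y,z]

@[simp]
theorem detXZ_apply (v : K[x,y,z] × K[x,y,z]) : detXZ K v = X 2 * v.1 - X 0 * v.2 := by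
  simp [detXZ]

theorem mem_span_X_zero_X_one_sq_of_X_two_mul_mem {f : K[x,y,z]}
    (h : X 2 * f ∈ Ideal.span {X 0, X 1 ^ 2}) : f ∈ Ideal.span {X 0, X 1 ^ 2} := by
  obtain ⟨a, b, hab⟩ := Ideal.mem_span_pair.mp h
  have hyz : X 2 * toYZPlane f = X 1 ^ 2 * toYZPlane b := by
    simpa [toYZPlane, mul_comm] using (congrArg toYZPlane hab).symm
  obtain ⟨c, hc⟩ : X 2 ∣ toYZPlane b := (X_prime.dvd_mul.mp (Dvd.intro _ hyz)).resolve_left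
    (not_dvd_of_map_eq_zero (eval ![0, 1, 0]) (by simp) (by simp))
  have hf : toYZPlane f = X 1 ^ 2 * c := mul_left_cancel₀ (X_ne_zero 2) (by rw [hyz, hc]; ring)
  have hd := sub_aeval_mem (I := Ideal.span {X 0}) (g := ![0, X 1, X 2])
    (fun i => by fin_cases i <;> simp) f
  obtain ⟨d, hd⟩ := Ideal.mem_span_singleton.mp hd
  change f - toYZPlane f = X 0 * d at hd
  exact Ideal.mem_span_pair.mpr ⟨d, c, by linear_combination -hd - hf⟩

theorem U₂_eq_comap : U₂ K = Submodule.comap (detXZ K) (Ideal.span {X 0 * X 2 - X 1 ^ 2}) := by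
  refine le_antisymm (Submodule.span_le.mpr ?_) fun ⟨F, G⟩ hFG => ?_
  · rintro _ (rfl | rfl | rfl) <;>
      simp only [SetLike.mem_coe, Submodule.mem_comap, detXZ_apply, Ideal.mem_span_singleton]
    exacts [⟨0, by ring⟩, ⟨-X 2, by ring⟩, ⟨-X 0, by ring⟩]
  obtain ⟨h, hh⟩ := Ideal.mem_span_singleton.mp hFG
  simp only [detXZ_apply] at hh
  have hF : F ∈ Ideal.span {X 0, X 1 ^ 2} := mem_span_X_zero_X_one_sq_of_X_two_mul_mem
    (Ideal.mem_span_pair.mpr ⟨G + X 2 * h, -h, by linear_combination -hh⟩)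
  obtain ⟨a, b, rfl⟩ := Ideal.mem_span_pair.mp hF
  -- subtracting `a • (x, z) + b • (y², z²)` leaves `(0, G - az - bz²)`, which lies in `U₂` iff
  -- `xz - y²` divides its second entry
  obtain ⟨c, hc⟩ : X 0 * X 2 - X 1 ^ 2 ∣ G - a * X 2 - b * X 2 ^ 2 := by
    have : X 0 * X 2 - X 1 ^ 2 ∣ X 0 * (G - a * X 2 - b * X 2 ^ 2) :=
      ⟨-h - b * X 2, by linear_combination -hh⟩
    exact (prime_quadric.dvd_mul.mp this).resolve_left (not_quadric_dvd (by simp))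
  refine Submodule.mem_span_triple.mpr ⟨a, b, c, Prod.ext ?_ ?_⟩
  · simp only [Prod.fst_add, Prod.smul_fst, smul_eq_mul, mul_zero, add_zero]
  · simp only [Prod.snd_add, Prod.smul_snd, smul_eq_mul]
    linear_combination -hc

variable (K) in
noncomputable def U : Submodule K[x,y,z] (K[x,y,z] × K[x,y,z]) :=
  Submodule.span K[x,y,z] {(X 0 ^ 2, X 1 ^ 2), (X 0 * X 1, X 1 * X 2), (X 0 * X 2, X 2 ^ 2)}

theorem U_eq_inf : U K = U₁ K ⊓ U₂ K ⊓ U₃ K := by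
  rw [U₁_eq_comap, U₂_eq_comap, U₃_eq_comap]
  refine le_antisymm (Submodule.span_le.mpr ?_) fun ⟨F, G⟩ ⟨⟨hF, hFG⟩, hG⟩ => ?_
  · rintro _ (rfl | rfl | rfl) <;>
      simp only [SetLike.mem_coe, Submodule.mem_inf, Submodule.mem_comap, LinearMap.fst_apply,
        LinearMap.snd_apply, detXZ_apply, Ideal.mem_span_singleton]
    exacts [⟨⟨⟨X 0, by ring⟩, ⟨X 0, by ring⟩⟩, Ideal.subset_span (by simp)⟩,
      ⟨⟨⟨X 1, by ring⟩, ⟨0, by ring⟩⟩, Ideal.subset_span (by simp)⟩,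
      ⟨⟨⟨X 2, by ring⟩, ⟨0, by ring⟩⟩, Ideal.subset_span (by simp)⟩]
  simp only [SetLike.mem_coe, Submodule.mem_comap, LinearMap.fst_apply, LinearMap.snd_apply,
    detXZ_apply, Ideal.mem_span_singleton] at hF hFG hG
  obtain ⟨a, rfl⟩ := hF
  obtain ⟨c, hc⟩ : X 0 * X 2 - X 1 ^ 2 ∣ X 2 * a - G := by
    have : X 0 * X 2 - X 1 ^ 2 ∣ X 0 * (X 2 * a - G) := by
      convert hFG using 1
      ring
    exact (prime_quadric.dvd_mul.mp this).resolve_left (not_quadric_dvd (by simp))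
  have hax : toXAxis (a - X 0 * c) = 0 := by
    have hG' : G = X 2 * a - (X 0 * X 2 - X 1 ^ 2) * c := by linear_combination -hc
    have hz : toXAxis (pderiv 2 G) = toXAxis (a - X 0 * c) := by
      simp [hG', toXAxis, mul_comm]
    exact hz ▸ ((mem_J_iff G).mp hG).2.2
  -- with `q = xz - y²`, the generators of `U` are `x • (x, z) - (0, q)`, `y • (x, z)` and
  -- `z • (x, z)`, while `(F, G) = a • (x, z) - c • (0, q)` with `a - xc ∈ (y, z)`
  obtain ⟨b, e, hbe⟩ := Ideal.mem_span_pair.mp ((mem_span_X_one_X_two_iff _).mpr hax)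
  refine Submodule.mem_span_triple.mpr ⟨c, b, e, Prod.ext ?_ ?_⟩
  · simp only [Prod.fst_add, Prod.smul_fst, smul_eq_mul]
    linear_combination X 0 * hbe
  · simp only [Prod.snd_add, Prod.smul_snd, smul_eq_mul]
    linear_combination X 2 * hbe + hc

theorem one_notMem_span_X_zero : (1 : K[x,y,z]) ∉ Ideal.span {X 0} :=
  (Ideal.ne_top_iff_one _).mp isPrime_span_X_zero.ne_top

theorem one_notMem_J : (1 : K[x,y,z]) ∉ J K :=
  (Ideal.ne_top_iff_one _).mp J_isPrimary.ne_top

theorem detXZ_one_zero_notMem : detXZ K (1, 0) ∉ Ideal.span {X 0 * X 2 - X 1 ^ 2} := by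
  simpa [Ideal.mem_span_singleton] using not_quadric_dvd (K := K) (f := X 2) (by simp)

theorem U₁_isPrimary : (U₁ K).IsPrimary := by
  rw [U₁_eq_comap]
  exact Submodule.IsPrimary.comap isPrime_span_X_zero.isPrimary _ (m₀ := (1, 0))
    one_notMem_span_X_zero

theorem U₂_isPrimary : (U₂ K).IsPrimary := by
  rw [U₂_eq_comap]
  exact Submodule.IsPrimary.comap isPrime_span_quadric.isPrimary _ detXZ_one_zero_notMem

theorem U₃_isPrimary : (U₃ K).IsPrimary := by
  rw [U₃_eq_comap]
  exact Submodule.IsPrimary.comap J_isPrimary _ (m₀ := (0, 1)) one_notMem_J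

theorem radical_colon_U₁ : ((U₁ K).colon Set.univ).radical = Ideal.span {X 0} := by
  rw [U₁_eq_comap, Submodule.IsPrimary.radical_colon_comap isPrime_span_X_zero.isPrimary _
    (m := (1, 0)) one_notMem_span_X_zero, LinearMap.fst_apply, Ideal.colon_singleton_one,
    isPrime_span_X_zero.radical]

theorem radical_colon_U₂ :
    ((U₂ K).colon Set.univ).radical = Ideal.span {X 0 * X 2 - X 1 ^ 2} := by
  rw [U₂_eq_comap, Submodule.IsPrimary.radical_colon_comap isPrime_span_quadric.isPrimary _
    detXZ_one_zero_notMem,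
    isPrime_span_quadric.colon_singleton_of_notMem detXZ_one_zero_notMem,
    isPrime_span_quadric.radical]

theorem radical_colon_U₃ : ((U₃ K).colon Set.univ).radical = Ideal.span {X 1, X 2} := by
  rw [U₃_eq_comap, Submodule.IsPrimary.radical_colon_comap J_isPrimary _ (m := (0, 1)) one_notMem_J,
    LinearMap.snd_apply, Ideal.colon_singleton_one, radical_J]

theorem U₂_inf_U₃_not_le_U₁ : ¬ U₂ K ⊓ U₃ K ≤ U₁ K := by
  rw [U₁_eq_comap, U₂_eq_comap, U₃_eq_comap, SetLike.not_le_iff_exists]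
  refine ⟨(X 1 ^ 2, X 2 ^ 2), Submodule.mem_inf.mpr ⟨?_, ?_⟩, ?_⟩ <;>
    simp only [Submodule.mem_comap, LinearMap.fst_apply, LinearMap.snd_apply, detXZ_apply,
      Ideal.mem_span_singleton]
  · exact ⟨-X 2, by ring⟩
  · exact Ideal.subset_span (by simp)
  · exact not_dvd_of_map_eq_zero (eval ![0, 1, 1]) (by simp) (by simp)

theorem U₁_inf_U₃_not_le_U₂ : ¬ U₁ K ⊓ U₃ K ≤ U₂ K := by
  rw [U₁_eq_comap, U₂_eq_comap, U₃_eq_comap, SetLike.not_le_iff_exists]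
  refine ⟨(X 0, 0), Submodule.mem_inf.mpr ⟨?_, ?_⟩, ?_⟩ <;>
    simp only [Submodule.mem_comap, LinearMap.fst_apply, LinearMap.snd_apply, detXZ_apply,
      Ideal.mem_span_singleton]
  · exact dvd_rfl
  · exact Submodule.zero_mem _
  · exact not_quadric_dvd (by simp)

theorem U₁_inf_U₂_not_le_U₃ : ¬ U₁ K ⊓ U₂ K ≤ U₃ K := by
  rw [U₁_eq_comap, U₂_eq_comap, U₃_eq_comap, SetLike.not_le_iff_exists]
  refine ⟨(X 0, X 2), Submodule.mem_inf.mpr ⟨?_, ?_⟩, ?_⟩ <;>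
    simp only [Submodule.mem_comap, LinearMap.fst_apply, LinearMap.snd_apply, detXZ_apply,
      Ideal.mem_span_singleton]
  · exact dvd_rfl
  · exact ⟨0, by ring⟩
  · exact fun h => by simpa [toXAxis] using ((mem_J_iff _).mp h).2.2

theorem span_X_zero_ne_span_quadric :
    (Ideal.span {X 0} : Ideal K[x,y,z]) ≠ Ideal.span {X 0 * X 2 - X 1 ^ 2} := by
  intro h
  have : (X 0 : K[x,y,z]) ∈ Ideal.span {X 0 * X 2 - X 1 ^ 2} := h ▸ Ideal.mem_span_singleton_self _
  exact not_quadric_dvd (by simp) (Ideal.mem_span_singleton.mp this)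

theorem span_X_zero_ne_span_X_one_X_two :
    (Ideal.span {X 0} : Ideal K[x,y,z]) ≠ Ideal.span {X 1, X 2} := by
  intro h
  have : (X 1 : K[x,y,z]) ∈ Ideal.span {X 0} := h ▸ Ideal.subset_span (by simp)
  exact not_dvd_of_map_eq_zero (eval ![0, 1, 1]) (by simp) (by simp)
    (Ideal.mem_span_singleton.mp this)

theorem span_quadric_ne_span_X_one_X_two :
    (Ideal.span {X 0 * X 2 - X 1 ^ 2} : Ideal K[x,y,z]) ≠ Ideal.span {X 1, X 2} := by
  intro h
  have : (X 1 : K[x,y,z]) ∈ Ideal.span {X 0 * X 2 - X 1 ^ 2} := h ▸ Ideal.subset_span (by simp)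
  exact not_quadric_dvd (by simp) (Ideal.mem_span_singleton.mp this)

end PrimaryDecompositionExample

open PrimaryDecompositionExample

/-- in `R = ℚ[x,y,z]` and `M = R²`, the submodule `U` generated by
`(x²,y²), (xy,yz), (xz,z²)` satisfies `U = U₁ ∩ U₂ ∩ U₃` with `U₁ = ⟨(0,1),(x,0)⟩`,
`U₂ = ⟨(x,z),(y²,z²),(0,xz−y²)⟩`, `U₃ = ⟨(1,0),(0,y²),(0,yz),(0,z²)⟩`, and the
associated primes of `M/U` are `(x)`, `(xz−y²)`, `(y,z)`. -/
theorem module_primary_decomposition_example :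
    let R := MvPolynomial (Fin 3) ℚ
    let x : R := MvPolynomial.X 0
    let y : R := MvPolynomial.X 1
    let z : R := MvPolynomial.X 2
    let U : Submodule R (R × R) :=
      Submodule.span R {(x^2, y^2), (x*y, y*z), (x*z, z^2)}
    let U1 : Submodule R (R × R) := Submodule.span R {((0:R), (1:R)), (x, 0)}
    let U2 : Submodule R (R × R) :=
      Submodule.span R {(x, z), (y^2, z^2), (0, x*z - y^2)}
    let U3 : Submodule R (R × R) :=
      Submodule.span R {((1:R), (0:R)), (0, y^2), (0, y*z), (0, z^2)}
    U = U1 ⊓ U2 ⊓ U3 ∧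
    associatedPrimes R ((R × R) ⧸ U)
      = {Ideal.span {x}, Ideal.span {x*z - y^2}, Ideal.span {y, z}} := by
  intro R x y z U U1 U2 U3
  have hU : U = U1 ⊓ U2 ⊓ U3 := U_eq_inf
  refine ⟨hU, ?_⟩
  rw [hU]
  exact Submodule.associatedPrimes_quotient_inf_inf U₁_isPrimary U₂_isPrimary U₃_isPrimary
    radical_colon_U₁ radical_colon_U₂ radical_colon_U₃ span_X_zero_ne_span_quadric
    span_X_zero_ne_span_X_one_X_two span_quadric_ne_span_X_one_X_two U₂_inf_U₃_not_le_U₁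
    U₁_inf_U₃_not_le_U₂ U₁_inf_U₂_not_le_U₃
end
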